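/- For every u = (u₁,u₂) with u₁ ∈ C⁴(cl B⁵;ℂ), u₂ ∈ C³(cl B⁵;ℂ) and every ω ∈ S⁴: ζ(ω, (L̃u)(ω)) = −ζ(ω, u(ω)) + Δ^{S⁴}_ω f(ω), where f(ξ) := u₁(ξ) + ξ^j ∂_j u₁(ξ) and Δ^{S⁴}_ω f := (δ^{jk} − ω^jω^k) ∂_j∂_k f(ω) − 4 ω^j ∂_j f(ω). -/

import Mathlib

open MeasureTheory ComplexConjugate

noncomputable section

abbrev E5 : Type := EuclideanSpace ℝ (Fin 5)

/-- the partial derivative in the `i`-th coordinate direction -/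
def pd (i : Fin 5) (f : E5 → ℂ) : E5 → ℂ :=
  fun x => fderiv ℝ f x (EuclideanSpace.single i 1)

/-- the iterated partial derivative `∂^β` for a multi-index `β` -/
def pdM (β : Fin 5 → ℕ) (f : E5 → ℂ) : E5 → ℂ :=
  (List.finRange 5).foldr (fun i g => (pd i)^[β i] g) f

/-- the Laplacian `Δf = ∑_j ∂_j∂_j f` -/
def lap (f : E5 → ℂ) : E5 → ℂ := fun x => ∑ j : Fin 5, pd j (pd j f) x

/-- the open unit ball `B⁵ ⊆ ℝ⁵` -/
def ball5 : Set E5 := Metric.ball 0 1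

/-- the unit sphere `S⁴ = ∂B⁵` -/
def sph4 : Set E5 := Metric.sphere 0 1

/-- the squared `L²` norm over the unit ball -/
def bL2Sq (f : E5 → ℂ) : ℝ := ∫ x in ball5, ‖f x‖ ^ 2

/-- the squared `H^m(B⁵)` norm: `∑_{|β| ≤ m} ‖∂^β f‖²_{L²(B⁵)}` -/
def HSq (m : ℕ) (f : E5 → ℂ) : ℝ :=
  ∑ β : Fin 5 → Fin (m + 1),
    if (∑ i, (β i : ℕ)) ≤ m then bL2Sq (pdM (fun i => (β i : ℕ)) f) else 0

/-- the sesquilinear form `(u|v)₁` -/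
def ip1 (u v : (E5 → ℂ) × (E5 → ℂ)) : ℂ :=
  (∑ i : Fin 5, ∑ j : Fin 5, ∑ k : Fin 5,
      ∫ x in ball5, pd i (pd j (pd k u.1)) x * conj (pd i (pd j (pd k v.1)) x)) +
    (∑ i : Fin 5, ∑ j : Fin 5,
      ∫ x in ball5, pd i (pd j u.2) x * conj (pd i (pd j v.2) x)) +
    (∑ i : Fin 5, ∑ j : Fin 5,
      ∫ ω in sph4, pd i (pd j u.1) ω * conj (pd i (pd j v.1) ω) ∂μH[4])

/-- the sesquilinear form `(u|v)₂` -/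
def ip2 (u v : (E5 → ℂ) × (E5 → ℂ)) : ℂ :=
  (∑ i : Fin 5, ∫ x in ball5, pd i (lap u.1) x * conj (pd i (lap v.1) x)) +
    (∑ i : Fin 5, ∑ j : Fin 5,
      ∫ x in ball5, pd i (pd j u.2) x * conj (pd i (pd j v.2) x)) +
    (∑ j : Fin 5, ∫ ω in sph4, pd j u.2 ω * conj (pd j v.2 ω) ∂μH[4])

/-- the sesquilinear form `(u|v)₃` -/
def ip3 (u v : (E5 → ℂ) × (E5 → ℂ)) : ℂ :=
  5 * ip1 u v + ip2 u v + ∫ ω in sph4, u.2 ω * conj (v.2 ω) ∂μH[4]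

/-- the sesquilinear form `(u|v)₄` -/
def ip4 (u v : (E5 → ℂ) × (E5 → ℂ)) : ℂ :=
  ip1 u v + ip2 u v + ∑ i : Fin 5, ∫ ω in sph4, pd i u.1 ω * conj (pd i v.1 ω) ∂μH[4]

/-- `ζ(ω, w(ω)) = ω^iω^j ∂_i∂_j w₁(ω) + 5ω^i ∂_i w₁(ω) + 3w₁(ω) + ω^j ∂_j w₂(ω) + 3w₂(ω)` -/
def zeta (w : (E5 → ℂ) × (E5 → ℂ)) (ω : E5) : ℂ :=
  (∑ i : Fin 5, ∑ j : Fin 5, (ω i : ℂ) * (ω j : ℂ) * pd i (pd j w.1) ω) +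
    5 * (∑ i : Fin 5, (ω i : ℂ) * pd i w.1 ω) + 3 * w.1 ω +
    (∑ j : Fin 5, (ω j : ℂ) * pd j w.2 ω) + 3 * w.2 ω

/-- the sesquilinear form `(u|v)₅` -/
def ip5 (u v : (E5 → ℂ) × (E5 → ℂ)) : ℂ :=
  (∫ ω in sph4, zeta u ω ∂μH[4]) * conj (∫ ω in sph4, zeta v ω ∂μH[4])

/-- the full sesquilinear form `(u|v) = ∑_{i=1}^{5} (u|v)_i` -/
def ipT (u v : (E5 → ℂ) × (E5 → ℂ)) : ℂ :=
  ip1 u v + ip2 u v + ip3 u v + ip4 u v + ip5 u v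

/-- the free operator `L̃u = (−ξ^j ∂_j u₁ − u₁ + u₂, Δu₁ − ξ^j ∂_j u₂ − 2u₂)` -/
def Ltil (u : (E5 → ℂ) × (E5 → ℂ)) : (E5 → ℂ) × (E5 → ℂ) :=
  (fun ξ => -(∑ j : Fin 5, (ξ j : ℂ) * pd j u.1 ξ) - u.1 ξ + u.2 ξ,
   fun ξ => lap u.1 ξ - (∑ j : Fin 5, (ξ j : ℂ) * pd j u.2 ξ) - 2 * u.2 ξ)

/-!
Write `E = ξ^m ∂_m` for the Euler operator. Since `ξ^iξ^j ∂_i∂_j g = (E² - E) g`, one has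
`ζ(ω, w) = ((E + 1)(E + 3) w₁ + (E + 3) w₂)(ω)` and `Δ^{S⁴}_ω f = (Δ f - E(E + 3) f)(ω)`.
With the commutation rules `[∂_i, E] = ∂_i` and `[Δ, E] = 2Δ` (so `Δ(E + 1) = (E + 3)Δ`), both sides
of the identity become the same polynomial in `E` applied to `u₁`, `u₂` and `Δu₁`.
-/

section PartialDerivatives

variable {f g : E5 → ℂ}

lemma contDiff_pd {n : WithTop ℕ∞} (hf : ContDiff ℝ (n + 1) f) (i : Fin 5) :
    ContDiff ℝ n (pd i f) :=
  (hf.fderiv_right le_rfl).clm_apply contDiff_const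

lemma pd_add (hf : Differentiable ℝ f) (hg : Differentiable ℝ g) (i : Fin 5) :
    pd i (f + g) = pd i f + pd i g := by
  ext x
  simp [pd, fderiv_add (hf x) (hg x)]

lemma pd_sub (hf : Differentiable ℝ f) (hg : Differentiable ℝ g) (i : Fin 5) :
    pd i (f - g) = pd i f - pd i g := by
  ext x
  simp [pd, fderiv_sub (hf x) (hg x)]

lemma pd_neg (i : Fin 5) : pd i (-f) = -pd i f := by
  ext x
  simp [pd, fderiv_neg]

lemma pd_const_smul (hf : Differentiable ℝ f) (c : ℂ) (i : Fin 5) :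
    pd i (c • f) = c • pd i f := by
  ext x
  simp [pd, fderiv_const_smul (hf x)]

lemma pd_sum {g : Fin 5 → E5 → ℂ} (hg : ∀ m, Differentiable ℝ (g m)) (i : Fin 5) (x : E5) :
    pd i (fun y => ∑ m, g m y) x = ∑ m, pd i (g m) x := by
  simp [pd, fderiv_fun_sum (fun m _ => hg m x)]

lemma contDiff_coord {n : WithTop ℕ∞} (m : Fin 5) : ContDiff ℝ n (fun ξ : E5 => (ξ m : ℂ)) :=
  (Complex.ofRealCLM.comp (EuclideanSpace.proj m) : E5 →L[ℝ] ℂ).contDiff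

lemma pd_coord_mul (hg : Differentiable ℝ g) (i m : Fin 5) (x : E5) :
    pd i (fun ξ => (ξ m : ℂ) * g ξ) x = (if m = i then g x else 0) + x m * pd i g x := by
  have hcoord : (fun ξ : E5 => (ξ m : ℂ)) =
      (Complex.ofRealCLM.comp (EuclideanSpace.proj m) : E5 →L[ℝ] ℂ) := rfl
  have hcoord_diff := (contDiff_coord (n := 1) m).differentiable one_ne_zero
  simp only [pd, fderiv_fun_mul (hcoord_diff x) (hg x), hcoord, ContinuousLinearMap.fderiv]
  split_ifs with h <;> simp [h, add_comm]

lemma differentiable_pd (hf : ContDiff ℝ 2 f) (i : Fin 5) : Differentiable ℝ (pd i f) :=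
  (contDiff_pd (n := 1) hf i).differentiable one_ne_zero

lemma pd_comm (hf : ContDiff ℝ 2 f) (i j : Fin 5) : pd i (pd j f) = pd j (pd i f) := by
  ext x
  have hdf : DifferentiableAt ℝ (fderiv ℝ f) x :=
    ((hf.fderiv_right (m := 1) le_rfl).differentiable one_ne_zero).differentiableAt
  have hsecond : ∀ k l : Fin 5, pd k (pd l f) x =
      fderiv ℝ (fderiv ℝ f) x (EuclideanSpace.single k 1) (EuclideanSpace.single l 1) := by
    intro k l
    unfold pd
    rw [fderiv_clm_apply hdf (differentiableAt_const _)]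
    simp
  rw [hsecond, hsecond]
  exact (hf.contDiffAt.isSymmSndFDerivAt (by simp)).eq _ _

end PartialDerivatives

def eulerOp (f : E5 → ℂ) : E5 → ℂ := fun ξ => ∑ m, (ξ m : ℂ) * pd m f ξ

def sphLap (f : E5 → ℂ) (ω : E5) : ℂ :=
  (∑ j : Fin 5, ∑ k : Fin 5,
    ((if j = k then (1 : ℂ) else 0) - (ω j : ℂ) * (ω k : ℂ)) * pd j (pd k f) ω) -
    4 * eulerOp f ω

section EulerOperator

variable {f g : E5 → ℂ}

lemma contDiff_eulerOp {n : WithTop ℕ∞} (hf : ContDiff ℝ (n + 1) f) :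
    ContDiff ℝ n (eulerOp f) :=
  ContDiff.sum fun m _ => (contDiff_coord m).mul (contDiff_pd hf m)

lemma eulerOp_add (hf : Differentiable ℝ f) (hg : Differentiable ℝ g) :
    eulerOp (f + g) = eulerOp f + eulerOp g := by
  ext ξ
  simp [eulerOp, pd_add hf hg, mul_add, Finset.sum_add_distrib]

lemma eulerOp_sub (hf : Differentiable ℝ f) (hg : Differentiable ℝ g) :
    eulerOp (f - g) = eulerOp f - eulerOp g := by
  ext ξ
  simp [eulerOp, pd_sub hf hg, mul_sub, Finset.sum_sub_distrib]

lemma eulerOp_neg : eulerOp (-f) = -eulerOp f := by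
  ext ξ
  simp [eulerOp, pd_neg]

lemma eulerOp_const_smul (hf : Differentiable ℝ f) (c : ℂ) :
    eulerOp (c • f) = c • eulerOp f := by
  ext ξ
  simp [eulerOp, pd_const_smul hf, Finset.mul_sum, mul_left_comm]

lemma pd_eulerOp_apply (hg : ContDiff ℝ 2 g) (i : Fin 5) (x : E5) :
    pd i (eulerOp g) x = pd i g x + ∑ m, (x m : ℂ) * pd i (pd m g) x := by
  have hpd := differentiable_pd hg
  change pd i (fun ξ => ∑ m, (ξ m : ℂ) * pd m g ξ) x = _
  rw [pd_sum fun m => ((contDiff_coord m).differentiable one_ne_zero).fun_mul (hpd m)]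
  simp [pd_coord_mul (hpd _), Finset.sum_add_distrib]

lemma pd_eulerOp (hg : ContDiff ℝ 2 g) (i : Fin 5) :
    pd i (eulerOp g) = pd i g + eulerOp (pd i g) := by
  ext x
  simp [pd_eulerOp_apply hg, eulerOp, pd_comm hg i]

lemma eulerOp_eulerOp_apply (hg : ContDiff ℝ 2 g) (x : E5) :
    eulerOp (eulerOp g) x =
      eulerOp g x + ∑ i, ∑ j, (x i : ℂ) * (x j : ℂ) * pd i (pd j g) x := by
  change ∑ i, (x i : ℂ) * pd i (eulerOp g) x = _
  simp only [pd_eulerOp_apply hg, mul_add, Finset.sum_add_distrib, Finset.mul_sum, mul_assoc]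
  rfl

lemma contDiff_lap {n : WithTop ℕ∞} (hf : ContDiff ℝ (n + 1 + 1) f) : ContDiff ℝ n (lap f) :=
  ContDiff.sum fun j _ => contDiff_pd (contDiff_pd hf j) j

lemma lap_add (hf : ContDiff ℝ 2 f) (hg : ContDiff ℝ 2 g) : lap (f + g) = lap f + lap g := by
  ext x
  simp [lap, pd_add (hf.differentiable two_ne_zero) (hg.differentiable two_ne_zero),
    pd_add (differentiable_pd hf _) (differentiable_pd hg _), Finset.sum_add_distrib]

lemma lap_eulerOp (hf : ContDiff ℝ 3 f) : lap (eulerOp f) = (2 : ℂ) • lap f + eulerOp (lap f) := by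
  have hf₂ : ContDiff ℝ 2 f := hf.of_le (by norm_num)
  have hpd : ∀ j, ContDiff ℝ 2 (pd j f) := contDiff_pd hf
  have hpd_eulerOp : ∀ j, pd j (pd j (eulerOp f)) =
      (2 : ℂ) • pd j (pd j f) + eulerOp (pd j (pd j f)) := fun j => by
    have hdiff := (contDiff_eulerOp (hpd j)).differentiable one_ne_zero
    rw [pd_eulerOp hf₂, pd_add (differentiable_pd hf₂ j) hdiff, pd_eulerOp (hpd j), two_smul,
      add_assoc]
  have hpd_lap : ∀ m x, pd m (lap f) x = ∑ j, pd m (pd j (pd j f)) x := fun m x =>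
    pd_sum (fun j => differentiable_pd (hpd j) j) m x
  ext x
  simp only [lap, hpd_eulerOp, Pi.add_apply, Pi.smul_apply, smul_eq_mul, Finset.sum_add_distrib,
    Finset.mul_sum]
  simp only [eulerOp, hpd_lap, Finset.mul_sum]
  rw [Finset.sum_comm]

lemma zeta_eq_eulerOp (w : (E5 → ℂ) × (E5 → ℂ)) (hw : ContDiff ℝ 2 w.1) (ω : E5) :
    zeta w ω = eulerOp (eulerOp w.1) ω + 4 * eulerOp w.1 ω + 3 * w.1 ω +
      eulerOp w.2 ω + 3 * w.2 ω := by
  rw [eulerOp_eulerOp_apply hw]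
  unfold zeta eulerOp
  ring

lemma sphLap_eq_lap_sub_eulerOp (hf : ContDiff ℝ 2 f) (ω : E5) :
    sphLap f ω = lap f ω - eulerOp (eulerOp f) ω - 3 * eulerOp f ω := by
  have htrace : (∑ j : Fin 5, ∑ k : Fin 5,
      ((if j = k then (1 : ℂ) else 0) - (ω j : ℂ) * (ω k : ℂ)) * pd j (pd k f) ω) =
      lap f ω - ∑ j, ∑ k, (ω j : ℂ) * (ω k : ℂ) * pd j (pd k f) ω := by
    simp [sub_mul, Finset.sum_sub_distrib, ite_mul, lap]
  rw [sphLap, htrace, eulerOp_eulerOp_apply hf]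
  ring

end EulerOperator

theorem stmt_6 (u : (E5 → ℂ) × (E5 → ℂ))
    (hu1 : ContDiff ℝ 4 u.1) (hu2 : ContDiff ℝ 3 u.2)
    (ω : E5) :
    zeta (Ltil u) ω =
      -zeta u ω +
        ((∑ j : Fin 5, ∑ k : Fin 5,
            ((if j = k then (1 : ℂ) else 0) - (ω j : ℂ) * (ω k : ℂ)) *
              pd j (pd k (fun ξ => u.1 ξ + ∑ m : Fin 5, (ξ m : ℂ) * pd m u.1 ξ)) ω) -
          4 * ∑ j : Fin 5,
            (ω j : ℂ) * pd j (fun ξ => u.1 ξ + ∑ m : Fin 5, (ξ m : ℂ) * pd m u.1 ξ) ω) := by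
  have hu₁ : ContDiff ℝ 2 u.1 := hu1.of_le (by norm_num)
  have hu₂ : ContDiff ℝ 2 u.2 := hu2.of_le (by norm_num)
  have hA₂ : ContDiff ℝ 2 (eulerOp u.1) := contDiff_eulerOp (hu1.of_le (by norm_num))
  have hd₁ := hu₁.differentiable two_ne_zero
  have hd₂ := hu₂.differentiable two_ne_zero
  have hdA := hA₂.differentiable two_ne_zero
  have hdEA := (contDiff_eulerOp (n := 1) hA₂).differentiable one_ne_zero
  have hdB := (contDiff_eulerOp (n := 1) hu₂).differentiable one_ne_zero
  have hdlap := (contDiff_lap (n := 1) (hu1.of_le (by norm_num))).differentiable one_ne_zero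
  have hLtil : Ltil u = (-eulerOp u.1 - u.1 + u.2, lap u.1 - eulerOp u.2 - (2 : ℂ) • u.2) := rfl
  change _ = _ + sphLap (u.1 + eulerOp u.1) ω
  rw [hLtil, zeta_eq_eulerOp _ ((hA₂.neg.sub hu₁).add hu₂), zeta_eq_eulerOp _ hu₁,
    sphLap_eq_lap_sub_eulerOp (f := u.1 + eulerOp u.1) (hu₁.add hA₂), lap_add hu₁ hA₂,
    lap_eulerOp (hu1.of_le (by norm_num))]
  simp (disch := apply_rules [Differentiable.add, Differentiable.sub, Differentiable.neg,
      Differentiable.const_smul]) only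
    [eulerOp_add, eulerOp_sub, eulerOp_neg, eulerOp_const_smul,
    Pi.add_apply, Pi.sub_apply, Pi.neg_apply, Pi.smul_apply, smul_eq_mul]
  ring
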